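/- arXiv:1912.00459 — 11 statements merged into one kernel-verified Lean document; each statement's English description precedes it below -/
import Mathlib

section
/- Given n agents with additive valuations over m divisible objects and any feasible fractional allocation z*, there exists a feasible fractional allocation z with at most n sharings such that every agent receives exactly the same utility as in z*. -/
open Finset

/-- `z` is a feasible fractional allocation of `m` objects among `n` agents. -/
def isAlloc {n m : ℕ} (z : Fin n → Fin m → ℝ) : Prop :=
  (∀ i o, 0 ≤ z i o) ∧ ∀ o, ∑ i, z i o = 1

/-- Agent `i`'s additive utility for her own bundle in allocation `z`. -/
noncomputable def util {n m : ℕ} (v z : Fin n → Fin m → ℝ) (i : Fin n) : ℝ :=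
  ∑ o, v i o * z i o

/-- The number of sharings of allocation `z`: `Σ_o (|{i : z i o > 0}| − 1)`. -/
noncomputable def sharings {n m : ℕ} (z : Fin n → Fin m → ℝ) : ℕ :=
  ∑ o, ((univ.filter fun i => 0 < z i o).card - 1)

/-!
The map sending `z` to its column sums and the agents' utilities is linear with values in a
space of dimension `m + n`. If a nonnegative `z` has more than `m + n` positive entries, some
nonzero vector of the kernel is supported on them; moving `z` along it, or along its negative,
until a first entry reaches zero keeps `z` nonnegative, preserves column sums and utilities, and
shrinks the support. Hence some allocation with the same utilities has at most `m + n` positive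
entries, and as every column contains one of them, it has at most `n` sharings.
-/

section BasicFeasibleSolution

variable {ι K E : Type*} [Fintype ι] [Field K] [AddCommGroup E] [Module K E]

lemma exists_ne_zero_map_eq_zero_of_finrank_lt_card [FiniteDimensional K E]
    (A : (ι → K) →ₗ[K] E) (S : Finset ι) (hS : Module.finrank K E < #S) :
    ∃ w, w ≠ 0 ∧ A w = 0 ∧ ∀ i ∉ S, w i = 0 := by
  let extend := Function.ExtendByZero.linearMap K ((↑) : S → ι)
  have hker : LinearMap.ker (A ∘ₗ extend) ≠ ⊥ :=
    LinearMap.ker_ne_bot_of_finrank_lt (by simpa using hS)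
  obtain ⟨c, hc, hc0⟩ := Submodule.ne_bot_iff _ |>.mp hker
  obtain ⟨j, hj⟩ := Function.ne_iff.mp hc0
  refine ⟨extend c, Function.ne_iff.mpr ⟨j, ?_⟩, hc, fun i hi => ?_⟩
  · simpa [extend, Subtype.val_injective.extend_apply] using hj
  · simp only [extend, Function.ExtendByZero.linearMap_apply]
    exact Function.extend_apply' _ _ _ fun ⟨j, hj⟩ => hi (hj ▸ j.2)

variable [LinearOrder K]

def posSupport (x : ι → K) : Finset ι := univ.filter fun i => 0 < x i

variable [IsStrictOrderedRing K]

lemma exists_add_smul_nonneg_posSupport_ssubset {y w : ι → K} (hy : 0 ≤ y)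
    (hw : ∀ i, y i = 0 → w i = 0) (hneg : ∃ i, w i < 0) :
    ∃ t : K, 0 ≤ y + t • w ∧ posSupport (y + t • w) ⊂ posSupport y := by
  obtain ⟨i₀, hi₀, hmin⟩ := (univ.filter fun i => w i < 0).exists_min_image
    (fun i => y i / -w i) (by simpa [Finset.Nonempty] using hneg)
  rw [mem_filter] at hi₀
  have hmin' : ∀ i, w i < 0 → y i₀ / -w i₀ * -w i ≤ y i := fun i hi =>
    (le_div_iff₀ (neg_pos.mpr hi)).mp (hmin i (by simpa using hi))
  refine ⟨y i₀ / -w i₀, fun i => ?_, ?_⟩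
  · have ht : 0 ≤ y i₀ / -w i₀ := div_nonneg (hy i₀) (neg_nonneg.mpr hi₀.2.le)
    rcases le_or_gt 0 (w i) with hwi | hwi
    · simpa using add_nonneg (hy i) (mul_nonneg ht hwi)
    · have := hmin' i hwi
      simp only [Pi.add_apply, Pi.smul_apply, smul_eq_mul, Pi.zero_apply]
      linarith
  · have hpos_of_ne {i} (h : y i ≠ 0) : 0 < y i := lt_of_le_of_ne (hy i) (Ne.symm h)
    refine Finset.ssubset_iff_of_subset (fun i hi => ?_) |>.mpr ⟨i₀, ?_, ?_⟩
    · simp only [posSupport, mem_filter, mem_univ, true_and] at hi ⊢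
      refine hpos_of_ne fun h => ?_
      simp [h, hw i h] at hi
    · simpa [posSupport] using hpos_of_ne fun h => hi₀.2.ne (hw i₀ h)
    · have hzero : y i₀ + y i₀ / -w i₀ * w i₀ = 0 := by
        field_simp [hi₀.2.ne]
        ring
      simp [posSupport, hzero]

lemma exists_nonneg_map_eq_card_posSupport_le_finrank [FiniteDimensional K E]
    (A : (ι → K) →ₗ[K] E) {x : ι → K} (hx : 0 ≤ x) :
    ∃ y, 0 ≤ y ∧ A y = A x ∧ #(posSupport y) ≤ Module.finrank K E := by
  induction hk : #(posSupport x) using Nat.strong_induction_on generalizing x with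
  | _ k ih =>
  by_cases hle : k ≤ Module.finrank K E
  · exact ⟨x, hx, rfl, hk ▸ hle⟩
  obtain ⟨w, hw0, hAw, hwS⟩ :=
    exists_ne_zero_map_eq_zero_of_finrank_lt_card A (posSupport x) (by omega)
  have hw : ∀ i, x i = 0 → w i = 0 := fun i hi => hwS i (by simp [posSupport, hi])
  obtain ⟨i, hi⟩ := Function.ne_iff.mp hw0
  obtain ⟨w', hw', hneg, hAw'⟩ :
      ∃ w' : ι → K, (∀ i, x i = 0 → w' i = 0) ∧ (∃ i, w' i < 0) ∧ A w' = 0 := by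
    rcases hi.lt_or_gt with hlt | hgt
    · exact ⟨w, hw, ⟨i, hlt⟩, hAw⟩
    · exact ⟨-w, by simpa using hw, ⟨i, by simpa using hgt⟩, by simp [hAw]⟩
  obtain ⟨t, hnonneg, hssub⟩ := exists_add_smul_nonneg_posSupport_ssubset hx hw' hneg
  obtain ⟨y, hy, hAy, hcard⟩ := ih _ (hk ▸ card_lt_card hssub) hnonneg rfl
  exact ⟨y, hy, by simp [hAy, hAw'], hcard⟩

end BasicFeasibleSolution

section Allocation

variable {n m : ℕ}

noncomputable def allocConstraints (v : Fin n → Fin m → ℝ) :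
    (Fin n × Fin m → ℝ) →ₗ[ℝ] (Fin m → ℝ) × (Fin n → ℝ) :=
  (LinearMap.pi fun o => ∑ i, LinearMap.proj (i, o)).prod
    (LinearMap.pi fun i => ∑ o, v i o • LinearMap.proj (i, o))

lemma allocConstraints_apply (v : Fin n → Fin m → ℝ) (y : Fin n × Fin m → ℝ) :
    allocConstraints v y = (fun o => ∑ i, y (i, o), util v (Function.curry y)) := by
  ext <;> simp [allocConstraints, util]

lemma isAlloc.exists_pos {z : Fin n → Fin m → ℝ} (hz : isAlloc z) (o : Fin m) :
    ∃ i, 0 < z i o := by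
  simpa using exists_lt_of_sum_lt (s := univ) (f := 0) (g := (z · o)) (by simp [hz.2 o])

lemma isAlloc.sharings_add_eq_card_posSupport {z : Fin n → Fin m → ℝ} (hz : isAlloc z) :
    sharings z + m = #(posSupport (Function.uncurry z)) := by
  have hcol (o : Fin m) : 1 ≤ #(univ.filter fun i => 0 < z i o) := by
    simpa [Finset.Nonempty] using hz.exists_pos o
  calc sharings z + m = ∑ o, #(univ.filter fun i => 0 < z i o) := by
        rw [sharings, ← sum_congr rfl fun o _ => Nat.sub_add_cancel (hcol o), sum_add_distrib]
        simp
    _ = #(posSupport (Function.uncurry z)) := by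
        simp only [posSupport, card_filter, Fintype.sum_prod_type, Function.uncurry_apply_pair]
        exact sum_comm

end Allocation

/-- For any feasible allocation `z*` there is a feasible allocation with at most `n`
sharings giving every agent exactly the same utility. -/
theorem exists_same_utilities_few_sharings {n m : ℕ}
    (v zs : Fin n → Fin m → ℝ) (hzs : isAlloc zs) :
    ∃ z : Fin n → Fin m → ℝ, isAlloc z ∧ sharings z ≤ n ∧
      ∀ i, util v z i = util v zs i := by
  obtain ⟨y, hy, hAy, hcard⟩ := exists_nonneg_map_eq_card_posSupport_le_finrank
    (allocConstraints v) (x := Function.uncurry zs) fun p => hzs.1 p.1 p.2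
  simp only [allocConstraints_apply, Prod.ext_iff, funext_iff] at hAy
  have hz : isAlloc (Function.curry y) :=
    ⟨fun i o => hy (i, o), fun o => (hAy.1 o).trans (hzs.2 o)⟩
  refine ⟨Function.curry y, hz, ?_, hAy.2⟩
  have hrank : Module.finrank ℝ ((Fin m → ℝ) × (Fin n → ℝ)) = m + n := by simp
  have hsharings := hz.sharings_add_eq_card_posSupport
  rw [Function.uncurry_curry] at hsharings
  omega
end

section
/- Given n agents with additive valuations over m divisible objects and any feasible fractional allocation z*, there exists a feasible fractional allocation z with at most n−1 sharings such that every agent receives at least as much utility as in z*. -/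
open Finset

/-!
Among the allocations that give every agent at least her utility under `z*`, take one, `z`, with
the fewest nonzero entries. Every object is held by somebody, so `z` has `sharings z + m` nonzero
entries. If there were `n` or more sharings, the perturbations supported on the support of `z`
would form a space of dimension at least `n + m`, so one of them, `d ≠ 0`, has zero column sums
and changes the utilities of all agents by the same amount, `0` or `1` (a kernel vector of the
`n + m` linear constraints, or else a preimage of `(0, 1)`). Moving from `z` along `d` until the
first entry reaches zero keeps the allocation feasible, lowers no utility and shrinks the
support, contradicting minimality.
-/

theorem LinearMap.exists_ne_zero_map_eq_zero_or_eq {K V W : Type*} [DivisionRing K]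
    [AddCommGroup V] [Module K V] [FiniteDimensional K V]
    [AddCommGroup W] [Module K W] [FiniteDimensional K W]
    (f : V →ₗ[K] W) (hdim : Module.finrank K W ≤ Module.finrank K V) {w : W} (hw : w ≠ 0) :
    ∃ x ≠ 0, f x = 0 ∨ f x = w := by
  by_cases hf : Function.Injective f
  · have hsurj : Function.Surjective f :=
      (f.injective_iff_surjective_of_finrank_eq_finrank
        (le_antisymm (f.finrank_le_finrank_of_injective hf) hdim)).1 hf
    obtain ⟨x, rfl⟩ := hsurj w
    exact ⟨x, fun hx => hw (by rw [hx, map_zero]), Or.inr rfl⟩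
  · rw [injective_iff_map_eq_zero] at hf
    push Not at hf
    obtain ⟨x, hx, hx0⟩ := hf
    exact ⟨x, hx0, Or.inl hx⟩

theorem exists_add_smul_nonneg_card_support_lt {ι : Type*} [Fintype ι] {x y : ι → ℝ}
    (hx : 0 ≤ x) (hyx : ∀ p, x p = 0 → y p = 0) (hy : ∃ p, y p < 0) :
    ∃ t : ℝ, 0 < t ∧ 0 ≤ x + t • y ∧ #{p | (x + t • y) p ≠ 0} < #{p | x p ≠ 0} := by
  classical
  have hxpos : ∀ p, y p < 0 → 0 < x p := fun p hp =>
    (hx p).lt_of_ne fun h => hp.ne (hyx p h.symm)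
  obtain ⟨q, hq, hqmin⟩ := exists_min_image {p | y p < 0} (fun p => x p / -y p)
    (by obtain ⟨p, hp⟩ := hy; exact ⟨p, by simpa using hp⟩)
  simp only [mem_filter, mem_univ, true_and] at hq hqmin
  refine ⟨x q / -y q, div_pos (hxpos q hq) (neg_pos.2 hq), fun p => ?_, ?_⟩
  · have key : x q / -y q * -y p ≤ x p := by
      rcases le_or_gt 0 (y p) with hp | hp
      · exact (mul_nonpos_of_nonneg_of_nonpos (div_nonneg (hx q) (neg_pos.2 hq).le)
          (neg_nonpos.2 hp)).trans (hx p)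
      · exact (le_div_iff₀ (neg_pos.2 hp)).1 (hqmin p hp)
    simp only [Pi.add_apply, Pi.smul_apply, smul_eq_mul, Pi.zero_apply]
    linarith
  · refine card_lt_card ((ssubset_iff_of_subset fun p => ?_).2 ⟨q, ?_, ?_⟩)
    · simp only [mem_filter, mem_univ, true_and, Pi.add_apply, Pi.smul_apply, smul_eq_mul]
      intro h hp
      rw [hp, hyx p hp, mul_zero, add_zero] at h
      exact h rfl
    · simpa using (hxpos q hq).ne'
    · have : y q ≠ 0 := hq.ne
      simp only [mem_filter, mem_univ, true_and, Pi.add_apply, Pi.smul_apply, smul_eq_mul]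
      rw [not_not, div_neg, neg_mul, div_mul_cancel₀ _ this, add_neg_cancel]

theorem card_support_eq_sharings_add {n m : ℕ} {z : Fin n → Fin m → ℝ} (hz : isAlloc z) :
    #{p | Function.uncurry z p ≠ 0} = sharings z + m := by
  have hpos : ∀ o, 0 < #{i | 0 < z i o} := fun o => by
    obtain ⟨i, -, hi⟩ := exists_lt_of_sum_lt (s := univ) (f := 0) (g := (z · o))
      (by simp [hz.2 o])
    exact card_pos.2 ⟨i, by simpa using hi⟩
  calc #{p | Function.uncurry z p ≠ 0}
      = ∑ o, #{i | 0 < z i o} := by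
        rw [card_filter, Fintype.sum_prod_type_right]
        refine sum_congr rfl fun o _ => ?_
        rw [card_filter]
        refine sum_congr rfl fun i _ => ?_
        by_cases h : z i o = 0 <;> simp [h, (hz.1 i o).lt_iff_ne']
    _ = ∑ o, (#{i | 0 < z i o} - 1 + 1) :=
        sum_congr rfl fun o _ => (Nat.sub_add_cancel (hpos o)).symm
    _ = sharings z + m := by simp [sharings, sum_add_distrib]

noncomputable def colSumsAndGains {n m : ℕ} (v : Fin n → Fin m → ℝ) :
    (Fin n × Fin m → ℝ) →ₗ[ℝ] (Fin m → ℝ) × (Fin n → ℝ) where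
  toFun d := (fun o => ∑ i, d (i, o), fun i => ∑ o, v i o * d (i, o))
  map_add' _ _ := by ext <;> simp [sum_add_distrib, mul_add]
  map_smul' _ _ := by ext <;> simp [mul_sum, mul_left_comm]

theorem exists_nonneg_gain_perturbation {n m : ℕ} (v : Fin n → Fin m → ℝ)
    {S : Finset (Fin n × Fin m)} (hn : 0 < n) (hS : n + m ≤ #S) :
    ∃ d : Fin n × Fin m → ℝ, d ≠ 0 ∧ (∀ p ∉ S, d p = 0) ∧ (∀ o, ∑ i, d (i, o) = 0) ∧
      ∀ i, 0 ≤ ∑ o, v i o * d (i, o) := by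
  set E := Function.ExtendByZero.linearMap ℝ (Subtype.val : S → Fin n × Fin m)
  obtain ⟨c, hc, hcw⟩ := ((colSumsAndGains v).comp E).exists_ne_zero_map_eq_zero_or_eq
    (by simpa [add_comm] using hS) (w := (0, 1))
    (by simpa [Prod.ext_iff, funext_iff] using ⟨⟨0, hn⟩⟩)
  refine ⟨E c, fun h => hc ((E.map_eq_zero_iff
    (Function.extend_injective Subtype.val_injective (0 : Fin n × Fin m → ℝ))).1 h),
    fun p hp => Function.extend_apply' _ _ _ fun ⟨q, hq⟩ => hp (hq ▸ q.2), ?_⟩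
  rcases hcw with h | h <;>
  · simp only [LinearMap.comp_apply, colSumsAndGains, LinearMap.coe_mk, AddHom.coe_mk,
      Prod.ext_iff, funext_iff] at h
    exact ⟨h.1, fun i => by simp [h.2 i]⟩

theorem exists_alloc_card_support_lt {n m : ℕ} {v z : Fin n → Fin m → ℝ} (hz : isAlloc z)
    {d : Fin n × Fin m → ℝ} (hd : d ≠ 0) (hdz : ∀ p, Function.uncurry z p = 0 → d p = 0)
    (hcol : ∀ o, ∑ i, d (i, o) = 0) (hgain : ∀ i, 0 ≤ ∑ o, v i o * d (i, o)) :
    ∃ z', isAlloc z' ∧ (∀ i, util v z i ≤ util v z' i) ∧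
      #{p | Function.uncurry z' p ≠ 0} < #{p | Function.uncurry z p ≠ 0} := by
  have hneg : ∃ p, d p < 0 := by
    by_contra! h
    exact hd (funext fun ⟨i, o⟩ =>
      (sum_eq_zero_iff_of_nonneg fun j _ => h (j, o)).1 (hcol o) i (mem_univ i))
  obtain ⟨t, ht, hnonneg, hlt⟩ :=
    exists_add_smul_nonneg_card_support_lt (fun p => hz.1 p.1 p.2) hdz hneg
  refine ⟨Function.curry (Function.uncurry z + t • d), ⟨fun i o => hnonneg (i, o), fun o => ?_⟩,
    fun i => ?_, by rwa [Function.uncurry_curry]⟩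
  · simp [sum_add_distrib, ← mul_sum, hz.2 o, hcol o]
  · have : util v z i ≤ util v z i + t * ∑ o, v i o * d (i, o) :=
      le_add_of_nonneg_right (mul_nonneg ht.le (hgain i))
    simpa [util, mul_add, sum_add_distrib, mul_sum, mul_left_comm] using this

/-- For any feasible allocation `z*` there is a feasible allocation with at most `n − 1`
sharings giving every agent at least as much utility. -/
theorem exists_weakly_better_few_sharings {n m : ℕ}
    (v zs : Fin n → Fin m → ℝ) (hzs : isAlloc zs) :
    ∃ z : Fin n → Fin m → ℝ, isAlloc z ∧ sharings z ≤ n - 1 ∧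
      ∀ i, util v zs i ≤ util v z i := by
  obtain ⟨z, ⟨hz, hzu⟩, hmin⟩ := exists_minimalFor_of_wellFoundedLT
    (fun z => isAlloc z ∧ ∀ i, util v zs i ≤ util v z i)
    (fun z => #{p | Function.uncurry z p ≠ 0}) ⟨zs, hzs, fun _ => le_rfl⟩
  refine ⟨z, hz, not_lt.1 fun hsh => ?_, hzu⟩
  have hcard := card_support_eq_sharings_add hz
  have hn : 0 < n := Nat.pos_of_ne_zero fun h => by subst h; simp at hcard; omega
  obtain ⟨d, hd, hdz, hcol, hgain⟩ :=
    exists_nonneg_gain_perturbation v (S := {p | Function.uncurry z p ≠ 0}) hn (by omega)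
  obtain ⟨z', hz', hzz', hlt⟩ :=
    exists_alloc_card_support_lt hz hd (fun p hp => hdz p (by simpa using hp)) hcol hgain
  exact hlt.not_ge (hmin ⟨hz', fun i => (hzu i).trans (hzz' i)⟩ hlt.le)
end

section
/- The bound n in the utility-preserving sharing theorem is tight: there exists an instance with n agents and n objects, and a feasible allocation z*, such that no allocation giving every agent exactly the same utility as z* has fewer than n shared objects. -/
/-!
If an object `o` is not shared, a single agent `j` owns all of it. For `j = o` this gives `j` a
utility of at least `n² − n + 1 > n`. For `j ≠ o`, agent `o` gets none of her own good, so her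
utility `n` is the total amount she receives; as only `n` units exist in all, every other agent,
`j` included, receives nothing, contradicting `z j o = 1`.
-/

open Finset

namespace isAlloc

variable {n m : ℕ} {z : Fin n → Fin m → ℝ}

lemma exists_eq_one_of_not_shared (hz : isAlloc z) {o : Fin m}
    (ho : ¬ ∃ i, 0 < z i o ∧ z i o < 1) : ∃ j, z j o = 1 ∧ ∀ i, i ≠ j → z i o = 0 := by
  push Not at ho
  obtain ⟨j, hj⟩ : ∃ j, 0 < z j o := by
    by_contra! h
    have := hz.2 o
    rw [sum_eq_zero fun i _ => le_antisymm (h i) (hz.1 i o)] at this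
    norm_num at this
  have hsplit := (add_sum_erase univ (fun i => z i o) (mem_univ j)).trans (hz.2 o)
  have hrest : 0 ≤ ∑ i ∈ univ.erase j, z i o := sum_nonneg fun i _ => hz.1 i o
  have hjo : z j o = 1 := by linarith [ho j hj]
  refine ⟨j, hjo, fun i hij => ?_⟩
  rw [hjo, add_eq_left, sum_eq_zero_iff_of_nonneg fun i _ => hz.1 i o] at hsplit
  exact hsplit i (mem_erase.2 ⟨hij, mem_univ i⟩)

lemma sum_sum_eq (hz : isAlloc z) : ∑ i, ∑ o, z i o = m := by
  rw [sum_comm]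
  simp [hz.2]

lemma eq_zero_of_row_sum_eq {k : Fin n} (hz : isAlloc z) (hk : ∑ o, z k o = m) {i : Fin n}
    (hik : i ≠ k) (o : Fin m) : z i o = 0 := by
  have hrow : ∀ i, 0 ≤ ∑ o, z i o := fun i => sum_nonneg fun o _ => hz.1 i o
  have hpair : ∑ o, z i o + ∑ o, z k o ≤ m := by
    rw [← sum_pair (f := fun i => ∑ o, z i o) hik, ← hz.sum_sum_eq]
    exact sum_le_sum_of_subset_of_nonneg (subset_univ _) fun i _ _ => hrow i
  have hio : z i o ≤ ∑ o, z i o := single_le_sum (fun o _ => hz.1 i o) (mem_univ o)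
  linarith [hz.1 i o]

end isAlloc

section DiagonalValuation

variable {n : ℕ} {a : ℝ} {v : Fin n → Fin n → ℝ}

lemma util_eq_of_diagonal (hv : ∀ i o, v i o = if i = o then a else 1)
    (z : Fin n → Fin n → ℝ) (i : Fin n) : util v z i = ∑ o, z i o + (a - 1) * z i i := by
  have hterm : ∀ o, v i o * z i o = z i o + if i = o then (a - 1) * z i o else 0 := by
    intro o
    rw [hv]
    split_ifs with h
    · subst h; ring
    · ring
  rw [util, sum_congr rfl fun o _ => hterm o, sum_add_distrib, sum_ite_eq, if_pos (mem_univ i)]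

variable (hv : ∀ i o, v i o = if i = o then (n : ℝ) ^ 2 - n + 1 else 1)
include hv

lemma util_eq_of_equal_split (hn : n ≠ 0) {zs : Fin n → Fin n → ℝ}
    (hzs : ∀ i o, zs i o = 1 / n) (i : Fin n) : util v zs i = n := by
  simp only [util_eq_of_diagonal hv, hzs, sum_const, card_univ, Fintype.card_fin, nsmul_eq_mul]
  field_simp
  ring

lemma shared_of_util_eq (hn : 2 ≤ n) {z : Fin n → Fin n → ℝ} (hz : isAlloc z)
    (hutil : ∀ i, util v z i = n) (o : Fin n) : ∃ i, 0 < z i o ∧ z i o < 1 := by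
  have hn' : (2 : ℝ) ≤ n := by exact_mod_cast hn
  by_contra ho
  obtain ⟨j, hjo, hothers⟩ := hz.exists_eq_one_of_not_shared ho
  by_cases hj : j = o
  · subst hj
    have hrow : z j j ≤ ∑ o, z j o := single_le_sum (fun o _ => hz.1 j o) (mem_univ j)
    have := hutil j
    rw [util_eq_of_diagonal hv, hjo] at this
    nlinarith
  · have hoo : z o o = 0 := hothers o (Ne.symm hj)
    have hrow : ∑ o', z o o' = n := by
      simpa [util_eq_of_diagonal hv, hoo] using hutil o
    rw [hz.eq_zero_of_row_sum_eq hrow hj o] at hjo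
    exact zero_ne_one hjo

end DiagonalValuation

/-- Tightness of the bound `n` for utility-preserving allocations: in the instance where
agent `i` values good `i` at `n² − n + 1` and every other good at `1`, and `z*` is the
equal split, every allocation giving each agent exactly the same utility as `z*` has
at least `n` shared objects. -/
theorem same_utilities_n_shared_objects_tight (n : ℕ) (hn : 2 ≤ n)
    (v : Fin n → Fin n → ℝ)
    (hv : ∀ i o, v i o = if i = o then (n : ℝ)^2 - n + 1 else 1)
    (zs : Fin n → Fin n → ℝ) (hzs : ∀ i o, zs i o = 1 / n) :
    ∀ z : Fin n → Fin n → ℝ, isAlloc z → (∀ i, util v z i = util v zs i) →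
      n ≤ (univ.filter fun o : Fin n => ∃ i, 0 < z i o ∧ z i o < 1).card := by
  intro z hz hutil
  have hutil_n : ∀ i, util v z i = n := fun i =>
    (hutil i).trans (util_eq_of_equal_split hv (by omega) hzs i)
  rw [filter_true_of_mem fun o _ => shared_of_util_eq hv hn hz hutil_n o, card_univ,
    Fintype.card_fin]
end

section
/- The bound n−1 in the Pareto-improvement sharing theorem is tight: in the instance with n agents and n−1 goods each valued at n by all agents, every allocation giving each agent utility at least n−1 must have at least n−1 shared objects. -/
open Finset

/-!
Summed over the `n` agents, the bundles have total size `n − 1`, while each agent demands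
utility `n − 1`, i.e. a bundle of size at least `(n − 1)/n`. So every bundle has size exactly
`(n − 1)/n < 1`; no agent can own a whole object, and each object is split.
-/

lemma util_eq_mul_sum_of_const {n m : ℕ} {v : Fin n → Fin m → ℝ} {c : ℝ}
    (hv : ∀ i o, v i o = c) (z : Fin n → Fin m → ℝ) (i : Fin n) :
    util v z i = c * ∑ o, z i o := by
  simp only [util, hv, mul_sum]

namespace isAlloc

variable {n m : ℕ} {z : Fin n → Fin m → ℝ}

lemma mul_sum_eq_of_le (hz : isAlloc z) (hprop : ∀ i, (m : ℝ) ≤ n * ∑ o, z i o) (i : Fin n) :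
    n * ∑ o, z i o = m := by
  have htotal : ∑ _i : Fin n, (m : ℝ) = ∑ i, n * ∑ o, z i o := by
    rw [← mul_sum, hz.sum_sum_eq]
    simp
  exact ((sum_eq_sum_iff_of_le fun i _ => hprop i).mp htotal i (mem_univ i)).symm

lemma shared_of_sum_lt_one (hz : isAlloc z) (hsmall : ∀ i, ∑ o, z i o < 1) (o : Fin m) :
    ∃ i, 0 < z i o ∧ z i o < 1 := by
  obtain ⟨i, -, hi⟩ := exists_ne_zero_of_sum_ne_zero (s := univ) (f := (z · o))
    (by rw [hz.2 o]; exact one_ne_zero)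
  refine ⟨i, lt_of_le_of_ne (hz.1 i o) (Ne.symm hi), ?_⟩
  exact (single_le_sum (fun o' _ => hz.1 i o') (mem_univ o)).trans_lt (hsmall i)

end isAlloc

theorem pareto_improvement_shared_objects_tight_general (n : ℕ)
    (v : Fin n → Fin (n - 1) → ℝ) (hv : ∀ i o, v i o = (n : ℝ))
    (z : Fin n → Fin (n - 1) → ℝ) (hz : isAlloc z)
    (hu : ∀ i, (n : ℝ) - 1 ≤ util v z i) :
    n - 1 ≤ (univ.filter fun o : Fin (n - 1) => ∃ i, 0 < z i o ∧ z i o < 1).card := by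
  have hcast (i : Fin n) : ((n - 1 : ℕ) : ℝ) = n - 1 := by
    rw [Nat.cast_sub i.pos, Nat.cast_one]
  have hexact := hz.mul_sum_eq_of_le fun i => by
    rw [hcast i, ← util_eq_mul_sum_of_const hv]
    exact hu i
  have hsmall (i : Fin n) : ∑ o, z i o < 1 := by
    have hn : (0 : ℝ) < n := Nat.cast_pos.mpr i.pos
    have := hexact i
    rw [hcast i] at this
    nlinarith
  rw [filter_true_of_mem fun o _ => hz.shared_of_sum_lt_one hsmall o, card_univ, Fintype.card_fin]

/-- Tightness of the bound `n − 1`: with `n` agents and `n − 1` goods all valued at `n` by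
everyone, every allocation giving each agent utility at least `n − 1` must have at least
`n − 1` shared objects. -/
theorem pareto_improvement_shared_objects_tight (n : ℕ) (hn : 2 ≤ n)
    (v : Fin n → Fin (n - 1) → ℝ) (hv : ∀ i o, v i o = (n : ℝ))
    (z : Fin n → Fin (n - 1) → ℝ) (hz : isAlloc z)
    (hu : ∀ i, (n : ℝ) - 1 ≤ util v z i) :
    n - 1 ≤ (univ.filter fun o : Fin (n - 1) => ∃ i, 0 < z i o ∧ z i o < 1).card :=
  pareto_improvement_shared_objects_tight_general n v hv z hz hu
end

section
/- For any n agents with additive valuations, there exists a proportional fractional allocation with at most n−1 sharings. -/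
open Finset

/-!
Fix an agent `i₀`. The allocations that are proportional for every other agent form a compact
polytope, cut out by nonnegativity, the `m` column equations and `n - 1` utility inequalities.
Maximise the utility of `i₀` over it: the uniform allocation shows that the maximum is at least
`V_{i₀} / n`, and it is attained at an extreme point. At an extreme point the constraint columns
indexed by the positive entries are linearly independent, otherwise one could move in both
directions along a kernel vector; so at most `m + n - 1` entries are positive. Every object has
a positive entry, hence there are at most `n - 1` sharings.
-/

open Filter Topology

theorem IsCompact.exists_mem_extremePoints_isMaxOn {E : Type*} [AddCommGroup E] [Module ℝ E]
    [TopologicalSpace E] [T2Space E] [IsTopologicalAddGroup E] [ContinuousSMul ℝ E]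
    [LocallyConvexSpace ℝ E] {s : Set E} (hs : IsCompact s) (hne : s.Nonempty)
    (l : StrongDual ℝ E) : ∃ x ∈ s.extremePoints ℝ, IsMaxOn l s x := by
  have hface : IsExposed ℝ s {x ∈ s | ∀ y ∈ s, l y ≤ l x} := fun _ => ⟨l, rfl⟩
  obtain ⟨z, hzs, hz⟩ := hs.exists_isMaxOn hne l.continuous.continuousOn
  obtain ⟨x, hx⟩ := (hface.isCompact hs).extremePoints_nonempty ⟨z, hzs, hz⟩
  exact ⟨x, hface.isExtreme.extremePoints_subset_extremePoints hx, (extremePoints_subset hx).2⟩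

section Support

variable {ι F : Type*} [Fintype ι] [AddCommGroup F] [Module ℝ F]

theorem eventually_nonneg_add_smul {x d : ι → ℝ} (hx : 0 ≤ x) (hd : ∀ j, x j = 0 → d j = 0) :
    ∀ᶠ t in 𝓝 (0 : ℝ), 0 ≤ x + t • d := by
  suffices ∀ j, ∀ᶠ t in 𝓝 (0 : ℝ), 0 ≤ x j + t * d j by
    simpa [Pi.le_def] using eventually_all.2 this
  intro j
  rcases (hx j).eq_or_lt with h | h
  · simp [← h, hd j h.symm]
  · have hc : Continuous fun t : ℝ => x j + t * d j := by fun_prop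
    exact (continuousAt_const.eventually_lt hc.continuousAt (by simpa using h)).mono
      fun _ => le_of_lt

theorem eq_zero_of_mem_extremePoints_of_map_eq_zero (A : (ι → ℝ) →ₗ[ℝ] F) {S : Set (ι → ℝ)}
    {x d : ι → ℝ} (hx : x ∈ S.extremePoints ℝ) (hx₀ : 0 ≤ x)
    (hS : ∀ y, 0 ≤ y → A y = A x → y ∈ S) (hAd : A d = 0) (hd : ∀ j, x j = 0 → d j = 0) :
    d = 0 := by
  have hsymm : ∀ᶠ t in 𝓝 (0 : ℝ), 0 ≤ x + t • d ∧ 0 ≤ x + (-t) • d :=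
    (eventually_nonneg_add_smul hx₀ hd).and
      ((continuous_neg.tendsto' 0 0 neg_zero).eventually (eventually_nonneg_add_smul hx₀ hd))
  obtain ⟨t, ⟨hplus, hminus⟩, ht⟩ :=
    ((hsymm.filter_mono nhdsWithin_le_nhds).and (self_mem_nhdsWithin (s := {0}ᶜ))).exists
  have hmem : ∀ s : ℝ, 0 ≤ x + s • d → x + s • d ∈ S := fun s hs =>
    hS _ hs (by simp [hAd])
  have hseg : x ∈ openSegment ℝ (x + (-t) • d) (x + t • d) :=
    ⟨1 / 2, 1 / 2, by norm_num, by norm_num, by norm_num, by module⟩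
  have := hx.2 (hmem _ hminus) (hmem _ hplus) hseg
  simpa [show t ≠ 0 from ht] using this

theorem card_pos_le_finrank_of_mem_extremePoints [FiniteDimensional ℝ F]
    (A : (ι → ℝ) →ₗ[ℝ] F) {S : Set (ι → ℝ)} {x : ι → ℝ} (hx : x ∈ S.extremePoints ℝ)
    (hx₀ : 0 ≤ x) (hS : ∀ y, 0 ≤ y → A y = A x → y ∈ S) :
    #{i | 0 < x i} ≤ Module.finrank ℝ F := by
  classical
  suffices LinearIndependent ℝ fun j : {j // 0 < x j} => A (Pi.single j.1 1) by
    simpa [Fintype.card_subtype] using this.fintype_card_le_finrank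
  rw [Fintype.linearIndependent_iff]
  intro g hg j
  let d : ι → ℝ := fun i => if h : 0 < x i then g ⟨i, h⟩ else 0
  have hAd : A d = 0 := by
    rw [A.pi_apply_eq_sum_univ, ← Fintype.sum_subtype_add_sum_subtype (fun i => 0 < x i),
      Fintype.sum_eq_zero (fun i : {i // ¬0 < x i} => _) fun i => by simp [d, i.2], add_zero]
    convert hg using 3 with i
    · simp [d, i.2]
    · congr 1; ext; simp [Pi.single_apply, eq_comm]
  have hd := eq_zero_of_mem_extremePoints_of_map_eq_zero A hx hx₀ hS hAd
    fun i hi => by simp [d, hi]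
  simpa [d, j.2] using congrFun hd j

end Support

section Allocation

/- Allocations are encoded uncurried, as vectors indexed by `Fin n × Fin m`, so that the
polyhedral lemmas above apply to them. -/

variable {n m : ℕ}

theorem sharings_add_eq_card {z : Fin n → Fin m → ℝ} (hz : isAlloc z) :
    sharings z + m = #{p : Fin n × Fin m | 0 < z p.1 p.2} := by
  have hcol : ∀ o, 1 ≤ #{i | 0 < z i o} := fun o => by
    obtain ⟨i, -, hi⟩ := exists_lt_of_sum_lt (s := univ) (f := 0) (g := (z · o))
      (by simp [hz.2 o])
    exact card_pos.2 ⟨i, by simpa using hi⟩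
  rw [card_filter, Fintype.sum_prod_type_right, sharings]
  calc ∑ o, (#{i | 0 < z i o} - 1) + m = ∑ o, (#{i | 0 < z i o} - 1 + 1) := by
        simp [sum_add_distrib]
    _ = _ := sum_congr rfl fun o _ => by rw [Nat.sub_add_cancel (hcol o), card_filter]

theorem isCompact_setOf_isAlloc_curry :
    IsCompact {x : Fin n × Fin m → ℝ | isAlloc (Function.curry x)} := by
  refine isCompact_Icc (a := 0) (b := 1) |>.of_isClosed_subset ?_ fun x hx => ?_
  · simp only [isAlloc, Function.curry_apply, Set.ofPred_and, Set.ofPred_forall]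
    exact (isClosed_iInter fun i => isClosed_iInter fun o =>
      isClosed_le continuous_const (continuous_apply _)).inter
      (isClosed_iInter fun o => isClosed_eq (by fun_prop) continuous_const)
  · exact ⟨fun p => hx.1 p.1 p.2,
      fun p => (single_le_sum (fun i _ => hx.1 i p.2) (mem_univ p.1)).trans_eq (hx.2 p.2)⟩

theorem isAlloc_const_inv (hn : 0 < n) : isAlloc fun (_ : Fin n) (_ : Fin m) => (n : ℝ)⁻¹ :=
  ⟨fun _ _ => by positivity, fun _ => by simp [hn.ne']⟩

theorem util_const (v : Fin n → Fin m → ℝ) (c : ℝ) (i : Fin n) :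
    util v (fun _ _ => c) i = (∑ o, v i o) * c := by
  simp [util, sum_mul]

noncomputable def colSum (o : Fin m) : Module.Dual ℝ (Fin n × Fin m → ℝ) :=
  ∑ i, LinearMap.proj (i, o)

noncomputable def utilForm (v : Fin n → Fin m → ℝ) (i : Fin n) :
    Module.Dual ℝ (Fin n × Fin m → ℝ) :=
  ∑ o, v i o • LinearMap.proj (i, o)

@[simp]
theorem colSum_apply (o : Fin m) (x : Fin n × Fin m → ℝ) : colSum o x = ∑ i, x (i, o) := by
  simp [colSum]

@[simp]
theorem utilForm_apply (v : Fin n → Fin m → ℝ) (i : Fin n) (x : Fin n × Fin m → ℝ) :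
    utilForm v i x = util v (Function.curry x) i := by
  simp [utilForm, util]

def proportionalOn (v : Fin n → Fin m → ℝ) (s : Finset (Fin n)) : Set (Fin n × Fin m → ℝ) :=
  {x | isAlloc (Function.curry x) ∧ ∀ i ∈ s, (∑ o, v i o) / n ≤ utilForm v i x}

theorem isCompact_proportionalOn (v : Fin n → Fin m → ℝ) (s : Finset (Fin n)) :
    IsCompact (proportionalOn v s) := by
  simp only [proportionalOn, Set.ofPred_and, Set.ofPred_forall]
  exact isCompact_setOf_isAlloc_curry.inter_right <| isClosed_iInter fun i =>
    isClosed_iInter fun _ => isClosed_le continuous_const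
      (LinearMap.continuous_of_finiteDimensional _)

theorem uncurry_const_inv_mem_proportionalOn (hn : 0 < n) (v : Fin n → Fin m → ℝ)
    (s : Finset (Fin n)) : Function.uncurry (fun _ _ => (n : ℝ)⁻¹) ∈ proportionalOn v s :=
  ⟨by simpa using isAlloc_const_inv hn, fun i _ => by simp [util_const, div_eq_mul_inv]⟩

theorem card_pos_le_of_mem_extremePoints_proportionalOn {v : Fin n → Fin m → ℝ}
    {s : Finset (Fin n)} {x : Fin n × Fin m → ℝ}
    (hx : x ∈ (proportionalOn v s).extremePoints ℝ) : #{p | 0 < x p} ≤ m + #s := by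
  have hsupp := card_pos_le_finrank_of_mem_extremePoints
    (LinearMap.pi (Sum.elim colSum fun i : s => utilForm v i)) hx
    (fun p => hx.1.1.1 p.1 p.2) fun y hy hAy => by
      refine ⟨⟨fun i o => hy (i, o), fun o => ?_⟩, fun i hi => ?_⟩
      · have hcol := congrFun hAy (.inl o)
        simp only [LinearMap.pi_apply, Sum.elim_inl, colSum_apply] at hcol
        simpa [hcol] using hx.1.1.2 o
      · have hutil := congrFun hAy (.inr ⟨i, hi⟩)
        simp only [LinearMap.pi_apply, Sum.elim_inr] at hutil
        exact hutil ▸ hx.1.2 i hi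
  simpa using hsupp

end Allocation

/-- There always exists a proportional allocation with at most `n − 1` sharings. -/
theorem exists_proportional_few_sharings {n m : ℕ} (hn : 0 < n)
    (v : Fin n → Fin m → ℝ) :
    ∃ z : Fin n → Fin m → ℝ, isAlloc z ∧ sharings z ≤ n - 1 ∧
      ∀ i, (∑ o, v i o) / n ≤ util v z i := by
  let i₀ : Fin n := ⟨0, hn⟩
  have huniform := uncurry_const_inv_mem_proportionalOn hn v {i₀}ᶜ
  obtain ⟨x, hext, hmax⟩ := (isCompact_proportionalOn v {i₀}ᶜ).exists_mem_extremePoints_isMaxOn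
    ⟨_, huniform⟩ (utilForm v i₀).toContinuousLinearMap
  refine ⟨Function.curry x, hext.1.1, ?_, fun i => ?_⟩
  · have hsharings := sharings_add_eq_card hext.1.1
    have hsupp := card_pos_le_of_mem_extremePoints_proportionalOn hext
    simp only [Function.curry_apply, Prod.mk.eta] at hsharings
    rw [card_compl, card_singleton, Fintype.card_fin] at hsupp
    omega
  · by_cases hi : i = i₀
    · subst hi
      simpa [util_const, div_eq_mul_inv] using hmax huniform
    · simpa using hext.1.2 i (by simpa using hi)
end

section
/- In any consensus allocation, every 'big' good of the tightness instance must be shared: if agent i values good o at n−0.5 > n−1, then o cannot be fully allocated to any single agent in a consensus allocation. -/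
open Finset

theorem le_sum_mul_of_one_le {ι R : Type*} [Fintype ι] [Semiring R] [PartialOrder R]
    [IsOrderedRing R] {v z : ι → R} (hv : ∀ k, 0 ≤ v k) (hz : ∀ k, 0 ≤ z k) {o : ι}
    (ho : 1 ≤ z o) : v o ≤ ∑ k, v k * z k :=
  calc v o ≤ v o * z o := le_mul_of_one_le_right (hv o) ho
    _ ≤ ∑ k, v k * z k := single_le_sum (fun k _ => mul_nonneg (hv k) (hz k)) (mem_univ o)

theorem big_good_must_be_shared_general {n m : ℕ}
    (v : Fin n → Fin m → ℝ) (i : Fin n) (o : Fin m)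
    (hpos : ∀ o', 0 ≤ v i o') (hio : v i o = (n : ℝ) - 1/2)
    (z : Fin n → Fin m → ℝ) (hz : isAlloc z)
    (hcons : ∀ j, ∑ o', v i o' * z j o' = (n : ℝ) - 1) :
    ∀ j, z j o < 1 := by
  intro j
  by_contra! hfull
  have hbig : v i o ≤ ∑ o', v i o' * z j o' := le_sum_mul_of_one_le hpos (hz.1 j) hfull
  rw [hcons j, hio] at hbig
  linarith

/-- In a consensus allocation of the tightness instance, a 'big' good (valued by
agent `i` at `n − 0.5 > n − 1`, with all of `i`'s values nonnegative) cannot be fully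
allocated to any single agent. -/
theorem big_good_must_be_shared {n m : ℕ} (hn : 2 ≤ n)
    (v : Fin n → Fin m → ℝ) (i : Fin n) (o : Fin m)
    (hpos : ∀ o', 0 ≤ v i o') (hio : v i o = (n : ℝ) - 1/2)
    (z : Fin n → Fin m → ℝ) (hz : isAlloc z)
    (hcons : ∀ j, ∑ o', v i o' * z j o' = (n : ℝ) - 1) :
    ∀ j, z j o < 1 :=
  big_good_must_be_shared_general v i o hpos hio z hz hcons
end

section
/- Correctness of the DistinctBalancedPartition reduction for consensus allocation (forward direction): if the 2p distinct integers a_1,…,a_{2p} with sum 2S admit a partition into two size-p subsets of equal sum S, then the two-agent instance where Alice values object o at a_o and Bob at a_o + b (for fixed 0 < b < 1/(4p)) admits a consensus allocation with zero sharings. -/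
/-! Give the balanced half `X` to Alice and its complement to Bob. Each bundle has Alice-value `S`,
and since both bundles have exactly `p` objects, Bob's shift by `b` adds the same `p • b` to each,
so every agent values every bundle at exactly half of the total. -/

open Finset

lemma sum_eq_half_of_sum_eq_sum_compl {ι : Type*} [Fintype ι] [DecidableEq ι]
    {X : Finset ι} {w : ι → ℝ} (h : ∑ o ∈ X, w o = ∑ o ∈ Xᶜ, w o) :
    ∑ o ∈ X, w o = (∑ o, w o) / 2 ∧ ∑ o ∈ Xᶜ, w o = (∑ o, w o) / 2 := by
  have := sum_add_sum_compl X w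
  constructor <;> linarith

lemma sum_add_const_eq_sum_compl {ι M : Type*} [Fintype ι] [DecidableEq ι] [AddCommMonoid M]
    {X : Finset ι} {f : ι → M} (c : M) (h : ∑ o ∈ X, f o = ∑ o ∈ Xᶜ, f o)
    (hcard : #X = #Xᶜ) :
    ∑ o ∈ X, (f o + c) = ∑ o ∈ Xᶜ, (f o + c) := by
  rw [sum_add_distrib, sum_add_distrib, h, sum_const, sum_const, hcard]

section PartitionAlloc

variable {m : ℕ} (X : Finset (Fin m))

def partitionAlloc : Fin 2 → Fin m → ℝ :=
  fun i o => if o ∈ ![X, Xᶜ] i then 1 else 0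

lemma partitionAlloc_isAlloc : isAlloc (partitionAlloc X) := by
  refine ⟨fun i o => ?_, fun o => ?_⟩
  · unfold partitionAlloc
    split <;> norm_num
  · rw [Fin.sum_univ_two]
    by_cases ho : o ∈ X <;> simp [partitionAlloc, ho]

lemma partitionAlloc_eq_zero_or_one (i : Fin 2) (o : Fin m) :
    partitionAlloc X i o = 0 ∨ partitionAlloc X i o = 1 := by
  unfold partitionAlloc
  split <;> simp

lemma sum_mul_partitionAlloc (w : Fin m → ℝ) (i : Fin 2) :
    ∑ o, w o * partitionAlloc X i o = ∑ o ∈ ![X, Xᶜ] i, w o := by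
  simp only [partitionAlloc, mul_ite, mul_one, mul_zero, sum_ite_mem, univ_inter]

lemma partitionAlloc_consensus {n : ℕ} {v : Fin n → Fin m → ℝ}
    (hv : ∀ i, ∑ o ∈ X, v i o = ∑ o ∈ Xᶜ, v i o) (i : Fin n) (j : Fin 2) :
    ∑ o, v i o * partitionAlloc X j o = (∑ o, v i o) / 2 := by
  obtain ⟨hX, hXc⟩ := sum_eq_half_of_sum_eq_sum_compl (hv i)
  rw [sum_mul_partitionAlloc]
  fin_cases j
  · exact hX
  · exact hXc

end PartitionAlloc

theorem distinct_balanced_partition_forward_general (p : ℕ) (S : ℕ)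
    (a : Fin (2 * p) → ℕ)
    (hasum : ∑ o, a o = 2 * S)
    (b : ℝ)
    (v : Fin 2 → Fin (2 * p) → ℝ)
    (hvA : ∀ o, v 0 o = a o) (hvB : ∀ o, v 1 o = a o + b)
    (hpart : ∃ X : Finset (Fin (2 * p)), X.card = p ∧ ∑ o ∈ X, a o = S) :
    ∃ z : Fin 2 → Fin (2 * p) → ℝ, isAlloc z ∧ (∀ i o, z i o = 0 ∨ z i o = 1) ∧
      ∀ i j, ∑ o, v i o * z j o = (∑ o, v i o) / 2 := by
  obtain ⟨X, hXcard, hXsum⟩ := hpart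
  have hXc : #Xᶜ = p := by
    rw [card_compl, Fintype.card_fin, hXcard]
    omega
  have hXcsum : ∑ o ∈ Xᶜ, a o = S := by
    have := sum_add_sum_compl X a
    omega
  have hA : ∑ o ∈ X, (a o : ℝ) = ∑ o ∈ Xᶜ, (a o : ℝ) := by
    exact_mod_cast hXsum.trans hXcsum.symm
  refine ⟨partitionAlloc X, partitionAlloc_isAlloc X, partitionAlloc_eq_zero_or_one X,
    partitionAlloc_consensus X fun i => ?_⟩
  fin_cases i
  · simpa [hvA] using hA
  · simpa [hvB] using sum_add_const_eq_sum_compl b hA (hXcard.trans hXc.symm)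

/-- Forward direction of the DistinctBalancedPartition reduction: if the `2p` distinct
positive integers `a` (sum `2S`) admit a partition into two size-`p` subsets of equal sum
`S`, then the two-agent instance (Alice values `o` at `a o`, Bob at `a o + b` with
`0 < b < 1/(4p)`) admits an integral (zero-sharing) consensus allocation. -/
theorem distinct_balanced_partition_forward (p : ℕ) (hp : 0 < p) (S : ℕ)
    (a : Fin (2 * p) → ℕ) (ha : ∀ o, 0 < a o) (hainj : Function.Injective a)
    (hasum : ∑ o, a o = 2 * S)
    (b : ℝ) (hb : 0 < b) (hb' : b < 1 / (4 * p))
    (v : Fin 2 → Fin (2 * p) → ℝ)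
    (hvA : ∀ o, v 0 o = a o) (hvB : ∀ o, v 1 o = a o + b)
    (hpart : ∃ X : Finset (Fin (2 * p)), X.card = p ∧ ∑ o ∈ X, a o = S) :
    ∃ z : Fin 2 → Fin (2 * p) → ℝ, isAlloc z ∧ (∀ i o, z i o = 0 ∨ z i o = 1) ∧
      ∀ i j, ∑ o, v i o * z j o = (∑ o, v i o) / 2 :=
  distinct_balanced_partition_forward_general p S a hasum b v hvA hvB hpart
end

section
/- Correctness of the DistinctBalancedPartition reduction for consensus allocation (backward direction): if the two-agent instance (Alice values object o at a_o, Bob at a_o + b with 0 < b < 1/(4p)) admits an integral consensus allocation, then the integers a_1,…,a_{2p} admit a partition into two subsets of equal sum and equal cardinality p. -/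
/-!
Let `X` be the bundle Alice receives. Both agents value `X` at exactly half of their total, so
subtracting Alice's equation `∑_X a = S` from Bob's `∑_X a + |X| b = S + p b` leaves
`|X| b = p b`; since `b ≠ 0`, `|X| = p`.
-/

open Finset

lemma sum_mul_eq_sum_filter_eq_one {ι : Type*} [Fintype ι] {z : ι → ℝ}
    (hz : ∀ o, z o = 0 ∨ z o = 1) (f : ι → ℝ) :
    ∑ o, f o * z o = ∑ o ∈ univ.filter (z · = 1), f o := by
  rw [sum_filter]
  refine sum_congr rfl fun o _ => ?_
  rcases hz o with h | h <;> simp [h]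

lemma card_eq_half_of_sum_add_const_eq_half {ι : Type*} [Fintype ι] {a : ι → ℝ} {b : ℝ}
    (hb : b ≠ 0) {X : Finset ι} (ha : ∑ o ∈ X, a o = (∑ o, a o) / 2)
    (hab : ∑ o ∈ X, (a o + b) = (∑ o, (a o + b)) / 2) :
    (X.card : ℝ) = Fintype.card ι / 2 := by
  simp only [sum_add_distrib, sum_const, card_univ, nsmul_eq_mul, ha] at hab
  refine mul_right_cancel₀ hb ?_
  linarith

theorem distinct_balanced_partition_backward_general (p : ℕ) (S : ℕ)
    (a : Fin (2 * p) → ℕ)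
    (hasum : ∑ o, a o = 2 * S)
    (b : ℝ) (hb : 0 < b)
    (v : Fin 2 → Fin (2 * p) → ℝ)
    (hvA : ∀ o, v 0 o = a o) (hvB : ∀ o, v 1 o = a o + b)
    (hcons : ∃ z : Fin 2 → Fin (2 * p) → ℝ, isAlloc z ∧ (∀ i o, z i o = 0 ∨ z i o = 1) ∧
      ∀ i j, ∑ o, v i o * z j o = (∑ o, v i o) / 2) :
    ∃ X : Finset (Fin (2 * p)), X.card = p ∧ ∑ o ∈ X, a o = S := by
  obtain ⟨z, -, hz01, hbalanced⟩ := hcons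
  have hsplit := sum_mul_eq_sum_filter_eq_one (hz01 0)
  set X := univ.filter (z 0 · = 1)
  have hA := hbalanced 0 0
  have hB := hbalanced 1 0
  simp only [hvA, hsplit] at hA
  simp only [hvB, hsplit] at hB
  have hcard := card_eq_half_of_sum_add_const_eq_half hb.ne' hA hB
  have hasumR : ∑ o, (a o : ℝ) = 2 * S := by exact_mod_cast hasum
  refine ⟨X, ?_, ?_⟩
  · have : (X.card : ℝ) = p := by rw [hcard, Fintype.card_fin]; push_cast; ring
    exact_mod_cast this
  · have : ∑ o ∈ X, (a o : ℝ) = S := by rw [hA, hasumR]; ring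
    exact_mod_cast this

/-- Backward direction of the DistinctBalancedPartition reduction: if the two-agent
instance (Alice values `o` at `a o`, Bob at `a o + b` with `0 < b < 1/(4p)`) admits an
integral consensus allocation, then the integers `a` admit a partition into two subsets of
equal sum `S` and equal cardinality `p`. -/
theorem distinct_balanced_partition_backward (p : ℕ) (hp : 0 < p) (S : ℕ)
    (a : Fin (2 * p) → ℕ) (ha : ∀ o, 0 < a o) (hainj : Function.Injective a)
    (hasum : ∑ o, a o = 2 * S)
    (b : ℝ) (hb : 0 < b) (hb' : b < 1 / (4 * p))
    (v : Fin 2 → Fin (2 * p) → ℝ)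
    (hvA : ∀ o, v 0 o = a o) (hvB : ∀ o, v 1 o = a o + b)
    (hcons : ∃ z : Fin 2 → Fin (2 * p) → ℝ, isAlloc z ∧ (∀ i o, z i o = 0 ∨ z i o = 1) ∧
      ∀ i j, ∑ o, v i o * z j o = (∑ o, v i o) / 2) :
    ∃ X : Finset (Fin (2 * p)), X.card = p ∧ ∑ o ∈ X, a o = S :=
  distinct_balanced_partition_backward_general p S a hasum b hb v hvA hvB hcons
end

section
/- Correctness of the DistinctPartition-to-DistinctBalancedPartition reduction (forward direction): given distinct positive integers a_1,…,a_n with sum 2S and a subset X ⊆ [n] with |X| = k ≤ n/2 and Σ_{i∈X} a_i = S, the constructed 4n numbers admit a subset of exactly 2n numbers summing to T = 3^{n+1}·S + (3^{n+1}−3)/2. -/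
/-!
Take, for every index `i`, two of the four numbers attached to `i`: the big number and `3^{i+1}`
when `i ∈ X`, and the two halves of `3^{i+1}` otherwise. Either way the chosen pair contributes
`3^{i+1}` plus `3^{n+1} a i` exactly when `i ∈ X`, so `2n` numbers are chosen and their sum is
`3^{n+1} S + ∑_{i<n} 3^{i+1} = 3^{n+1} S + (3^{n+1} - 3)/2`.
-/

open Finset

theorem two_mul_sum_range_three_pow_succ_add_three (n : ℕ) :
    2 * ∑ i ∈ range n, 3 ^ (i + 1) + 3 = 3 ^ (n + 1) := by
  induction n with
  | zero => simp
  | succ m ih =>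
    rw [sum_range_succ, pow_succ 3 (m + 1)]
    omega

theorem sum_fin_three_pow_succ (n : ℕ) :
    ∑ i : Fin n, 3 ^ ((i : ℕ) + 1) = (3 ^ (n + 1) - 3) / 2 := by
  rw [Fin.sum_univ_eq_sum_range (fun i => 3 ^ (i + 1))]
  have := two_mul_sum_range_three_pow_succ_add_three n
  omega

section PairChoice

variable {ι : Type*} [DecidableEq ι] (X : Finset ι)

def pairChoice (i : ι) : Finset (ι ⊕ ι × Fin 3) :=
  if i ∈ X then {Sum.inl i, Sum.inr (i, 0)} else {Sum.inr (i, 1), Sum.inr (i, 2)}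

theorem card_pairChoice (i : ι) : (pairChoice X i).card = 2 := by
  unfold pairChoice
  split_ifs <;> simp

theorem sum_pairChoice {M : Type*} [AddCommMonoid M] (w : ι ⊕ ι × Fin 3 → M) (i : ι) :
    ∑ y ∈ pairChoice X i, w y =
      if i ∈ X then w (Sum.inl i) + w (Sum.inr (i, 0))
      else w (Sum.inr (i, 1)) + w (Sum.inr (i, 2)) := by
  unfold pairChoice
  split_ifs <;> simp

theorem pairwiseDisjoint_pairChoice (s : Set ι) : s.PairwiseDisjoint (pairChoice X) := by
  intro i _ j _ hij
  simp only [Function.onFun, pairChoice]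
  split_ifs <;> simp [Ne.symm hij]

theorem card_biUnion_pairChoice [Fintype ι] :
    (univ.biUnion (pairChoice X)).card = 2 * Fintype.card ι := by
  rw [card_biUnion (pairwiseDisjoint_pairChoice X _)]
  simp [card_pairChoice, mul_comm]

end PairChoice

theorem distinct_to_balanced_forward_general (n : ℕ) (S : ℕ)
    (a : Fin n → ℕ)
    (s : Fin n → Fin 2 → ℕ)
    (hs : ∀ i, 0 < s i 0 ∧ 0 < s i 1 ∧ s i 0 ≠ s i 1 ∧ s i 0 + s i 1 = 3 ^ ((i : ℕ) + 1))
    (w : (Fin n ⊕ Fin n × Fin 3) → ℕ)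
    (hwb : ∀ i, w (Sum.inl i) = 3 ^ (n + 1) * a i)
    (hw0 : ∀ i, w (Sum.inr (i, 0)) = 3 ^ ((i : ℕ) + 1))
    (hw1 : ∀ i, w (Sum.inr (i, 1)) = s i 0)
    (hw2 : ∀ i, w (Sum.inr (i, 2)) = s i 1)
    (X : Finset (Fin n)) (hXsum : ∑ i ∈ X, a i = S) :
    ∃ Y : Finset (Fin n ⊕ Fin n × Fin 3), Y.card = 2 * n ∧
      ∑ y ∈ Y, w y = 3 ^ (n + 1) * S + (3 ^ (n + 1) - 3) / 2 := by
  refine ⟨univ.biUnion (pairChoice X), by simp [card_biUnion_pairChoice], ?_⟩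
  have hpair : ∀ i, ∑ y ∈ pairChoice X i, w y =
      3 ^ (n + 1) * (if i ∈ X then a i else 0) + 3 ^ ((i : ℕ) + 1) := by
    intro i
    rw [sum_pairChoice]
    split_ifs
    · rw [hwb, hw0]
    · rw [hw1, hw2, (hs i).2.2.2, mul_zero, zero_add]
  rw [sum_biUnion (pairwiseDisjoint_pairChoice X _), sum_congr rfl fun i _ => hpair i,
    sum_add_distrib, ← mul_sum, sum_ite_mem_eq, hXsum, sum_fin_three_pow_succ]

/-- Forward direction of the DistinctPartition → DistinctBalancedPartition reduction:
from a subset `X` with `|X| = k ≤ n/2` and `Σ_{i∈X} a i = S`, the constructed `4n`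
numbers (`n` big numbers `3^{n+1}·a i` and `n` small triplets `(3^{i+1}, s i 0, s i 1)`
with `s i 0 + s i 1 = 3^{i+1}`) admit a subset of exactly `2n` numbers summing to
`3^{n+1}·S + (3^{n+1} − 3)/2`. -/
theorem distinct_to_balanced_forward (n : ℕ) (hn : 0 < n) (S : ℕ)
    (a : Fin n → ℕ) (ha : ∀ i, 0 < a i) (hainj : Function.Injective a)
    (hasum : ∑ i, a i = 2 * S)
    (s : Fin n → Fin 2 → ℕ)
    (hs : ∀ i, 0 < s i 0 ∧ 0 < s i 1 ∧ s i 0 ≠ s i 1 ∧ s i 0 + s i 1 = 3 ^ ((i : ℕ) + 1))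
    (w : (Fin n ⊕ Fin n × Fin 3) → ℕ)
    (hwb : ∀ i, w (Sum.inl i) = 3 ^ (n + 1) * a i)
    (hw0 : ∀ i, w (Sum.inr (i, 0)) = 3 ^ ((i : ℕ) + 1))
    (hw1 : ∀ i, w (Sum.inr (i, 1)) = s i 0)
    (hw2 : ∀ i, w (Sum.inr (i, 2)) = s i 1)
    (X : Finset (Fin n)) (hX : 2 * X.card ≤ n) (hXsum : ∑ i ∈ X, a i = S) :
    ∃ Y : Finset (Fin n ⊕ Fin n × Fin 3), Y.card = 2 * n ∧
      ∑ y ∈ Y, w y = 3 ^ (n + 1) * S + (3 ^ (n + 1) - 3) / 2 :=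
  distinct_to_balanced_forward_general n S a s hs w hwb hw0 hw1 hw2 X hXsum
end

section
/- Correctness of the DistinctPartition-to-DistinctBalancedPartition reduction (backward direction): in the constructed instance, any subset of the 4n numbers summing to T = 3^{n+1}·S + (3^{n+1}−3)/2 must have its big numbers summing to exactly 3^{n+1}·S, and hence yields a subset X of the original integers with Σ_{i∈X} a_i = S. -/
/-!
Write `M = 3^(n+1)`. Every big number is a multiple of `M`, while all `3n` small numbers
together sum to `2·(3 + 9 + ⋯ + 3^n) = M - 3 < M`. So in `∑ Y = M·S + (M - 3)/2` both sides are
`M·q + r` with `0 ≤ r < M`, and uniqueness of division by `M` forces the big numbers of `Y`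
to sum to `M·S`, i.e. the chosen `a i` to sum to `S`.
-/

open Finset

theorem Nat.eq_of_mul_add_eq_mul_add {m a b r s : ℕ} (hr : r < m) (hs : s < m)
    (h : m * a + r = m * b + s) : a = b := by
  have hm : 0 < m := by omega
  simpa [Nat.mul_add_div hm, Nat.div_eq_of_lt hr, Nat.div_eq_of_lt hs] using congrArg (· / m) h

theorem Finset.sum_filter_isLeft {α β M : Type*} [AddCommMonoid M] (u : Finset (α ⊕ β))
    (f : α ⊕ β → M) : ∑ x ∈ u.filter (·.isLeft), f x = ∑ a ∈ u.toLeft, f (Sum.inl a) := by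
  have h_toLeft : (u.filter (·.isLeft)).toLeft = u.toLeft := by ext; simp
  have h_toRight : (u.filter (·.isLeft)).toRight = ∅ := by ext; simp
  rw [sum_sum_eq_sum_toLeft_add_sum_toRight, h_toLeft, h_toRight, sum_empty, add_zero]

theorem two_mul_sum_range_three_pow_succ (n : ℕ) :
    2 * ∑ i ∈ range n, 3 ^ (i + 1) = 3 ^ (n + 1) - 3 := by
  induction n with
  | zero => simp
  | succ n ih =>
    have h3 : 3 ≤ 3 ^ (n + 1) := Nat.le_self_pow (by omega) 3
    rw [sum_range_succ, pow_succ 3 (n + 1)]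
    omega

theorem sum_eq_three_pow_sub_three_of_sum_fin_three {n : ℕ} (w : Fin n × Fin 3 → ℕ)
    (hw : ∀ i, ∑ j, w (i, j) = 2 * 3 ^ ((i : ℕ) + 1)) :
    ∑ p, w p = 3 ^ (n + 1) - 3 := by
  rw [Fintype.sum_prod_type, sum_congr rfl fun i _ => hw i, ← mul_sum,
    Fin.sum_univ_eq_sum_range (fun i => 3 ^ (i + 1)), two_mul_sum_range_three_pow_succ]

theorem distinct_to_balanced_backward_general (n : ℕ) (S : ℕ)
    (a : Fin n → ℕ)
    (s : Fin n → Fin 2 → ℕ)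
    (hs : ∀ i, 0 < s i 0 ∧ 0 < s i 1 ∧ s i 0 ≠ s i 1 ∧ s i 0 + s i 1 = 3 ^ ((i : ℕ) + 1))
    (w : (Fin n ⊕ Fin n × Fin 3) → ℕ)
    (hwb : ∀ i, w (Sum.inl i) = 3 ^ (n + 1) * a i)
    (hw0 : ∀ i, w (Sum.inr (i, 0)) = 3 ^ ((i : ℕ) + 1))
    (hw1 : ∀ i, w (Sum.inr (i, 1)) = s i 0)
    (hw2 : ∀ i, w (Sum.inr (i, 2)) = s i 1)
    (Y : Finset (Fin n ⊕ Fin n × Fin 3))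
    (hY : ∑ y ∈ Y, w y = 3 ^ (n + 1) * S + (3 ^ (n + 1) - 3) / 2) :
    (∑ y ∈ Y.filter (fun y => y.isLeft), w y) = 3 ^ (n + 1) * S ∧
      ∑ i ∈ univ.filter (fun i => Sum.inl i ∈ Y), a i = S := by
  have hbig : ∑ i ∈ Y.toLeft, w (Sum.inl i) = 3 ^ (n + 1) * ∑ i ∈ Y.toLeft, a i := by
    simp only [hwb, mul_sum]
  have hsmall_total : ∑ p, w (Sum.inr p) = 3 ^ (n + 1) - 3 :=
    sum_eq_three_pow_sub_three_of_sum_fin_three _ fun i => by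
      rw [Fin.sum_univ_three, hw0, hw1, hw2, add_assoc, (hs i).2.2.2, two_mul]
  have hsmall : ∑ p ∈ Y.toRight, w (Sum.inr p) < 3 ^ (n + 1) := by
    have hle := sum_le_univ_sum_of_nonneg (s := Y.toRight) (f := fun p => w (Sum.inr p))
      fun _ => Nat.zero_le _
    have hM : 0 < 3 ^ (n + 1) := by positivity
    omega
  have hsplit : 3 ^ (n + 1) * ∑ i ∈ Y.toLeft, a i + ∑ p ∈ Y.toRight, w (Sum.inr p) =
      3 ^ (n + 1) * S + (3 ^ (n + 1) - 3) / 2 := by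
    rw [← hbig, ← sum_sum_eq_sum_toLeft_add_sum_toRight, hY]
  have hA : ∑ i ∈ Y.toLeft, a i = S := Nat.eq_of_mul_add_eq_mul_add hsmall (by omega) hsplit
  have hfilter : univ.filter (fun i => Sum.inl i ∈ Y) = Y.toLeft := by ext; simp
  exact ⟨by rw [sum_filter_isLeft, hbig, hA], by rw [hfilter, hA]⟩

/-- Backward direction of the DistinctPartition → DistinctBalancedPartition reduction:
any subset `Y` of the constructed `4n` numbers summing to `T = 3^{n+1}·S + (3^{n+1}−3)/2`
has its big numbers summing to exactly `3^{n+1}·S`, hence the corresponding subset of the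
original integers sums to `S`. -/
theorem distinct_to_balanced_backward (n : ℕ) (hn : 0 < n) (S : ℕ)
    (a : Fin n → ℕ) (ha : ∀ i, 0 < a i) (hainat : Function.Injective a)
    (hasum : ∑ i, a i = 2 * S)
    (s : Fin n → Fin 2 → ℕ)
    (hs : ∀ i, 0 < s i 0 ∧ 0 < s i 1 ∧ s i 0 ≠ s i 1 ∧ s i 0 + s i 1 = 3 ^ ((i : ℕ) + 1))
    (w : (Fin n ⊕ Fin n × Fin 3) → ℕ)
    (hwb : ∀ i, w (Sum.inl i) = 3 ^ (n + 1) * a i)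
    (hw0 : ∀ i, w (Sum.inr (i, 0)) = 3 ^ ((i : ℕ) + 1))
    (hw1 : ∀ i, w (Sum.inr (i, 1)) = s i 0)
    (hw2 : ∀ i, w (Sum.inr (i, 2)) = s i 1)
    (Y : Finset (Fin n ⊕ Fin n × Fin 3))
    (hY : ∑ y ∈ Y, w y = 3 ^ (n + 1) * S + (3 ^ (n + 1) - 3) / 2) :
    (∑ y ∈ Y.filter (fun y => y.isLeft), w y) = 3 ^ (n + 1) * S ∧
      ∑ i ∈ univ.filter (fun i => Sum.inl i ∈ Y), a i = S :=
  distinct_to_balanced_backward_general n S a s hs w hwb hw0 hw1 hw2 Y hY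
end

section
/- The LP encoding of Partition always admits a feasible solution with at most k+1 nonzero variables, and admits a feasible solution with at most k nonzero variables if and only if the Partition instance a_1,…,a_k (with sum 2S) has an equal-sum split. -/
/-!
A feasible point is determined by `c = x 0`, which can be any `0 ≤ c ≤ 1` with
`∑ c j a j = S`; it has `k` nonzeros plus one for every item with `c j ∉ {0, 1}`.
So at most `k` nonzeros means `c` is the indicator of an equal-sum split, and
`k + 1` nonzeros are always reachable by the greedy fractional solution: a subset
of maximal weight `≤ S`, topped up by a fraction of one further item.
-/

open Finset

namespace PartitionLP

variable {ι : Type*} [Fintype ι] {w c : ι → ℝ} {x : Fin 2 → ι → ℝ}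

def IsFeasible (w : ι → ℝ) (x : Fin 2 → ι → ℝ) : Prop :=
  (∀ i j, 0 ≤ x i j) ∧ (∀ j, x 0 j + x 1 j = 1) ∧ ∑ j, x 0 j * w j = ∑ j, x 1 j * w j

noncomputable def nonzeroCount (x : Fin 2 → ι → ℝ) : ℕ := #{q : Fin 2 × ι | x q.1 q.2 ≠ 0}

noncomputable def cutCount (x : Fin 2 → ι → ℝ) : ℕ := #{j : ι | x 0 j ≠ 0 ∧ x 1 j ≠ 0}

theorem nonzeroCount_eq_card_add_cutCount (hx : ∀ j, x 0 j + x 1 j = 1) :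
    nonzeroCount x = Fintype.card ι + cutCount x := by
  have hcolumn : ∀ j, ((if x 0 j ≠ 0 then 1 else 0) + if x 1 j ≠ 0 then 1 else 0 : ℕ)
      = 1 + if x 0 j ≠ 0 ∧ x 1 j ≠ 0 then 1 else 0 := by
    intro j
    have := hx j
    by_cases h0 : x 0 j = 0 <;> by_cases h1 : x 1 j = 0 <;> simp_all
  rw [nonzeroCount, cutCount, card_filter, card_filter, Fintype.sum_prod_type_right,
    Fintype.card_eq_sum_ones, ← sum_add_distrib]
  simp only [Fin.sum_univ_two, hcolumn]

theorem IsFeasible.sum_mul_eq_half (hx : IsFeasible w x) :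
    ∑ j, x 0 j * w j = (∑ j, w j) / 2 := by
  have htotal : ∑ j, x 0 j * w j + ∑ j, x 1 j * w j = ∑ j, w j := by
    rw [← sum_add_distrib]
    exact sum_congr rfl fun j _ => by rw [← add_mul, hx.2.1 j, one_mul]
  linarith [hx.2.2]

theorem isFeasible_of_sum_mul_eq_half (hc0 : ∀ j, 0 ≤ c j) (hc1 : ∀ j, c j ≤ 1)
    (hc : ∑ j, c j * w j = (∑ j, w j) / 2) : IsFeasible w ![c, 1 - c] := by
  refine ⟨?_, fun j => by simp, ?_⟩
  · intro i j
    fin_cases i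
    · exact hc0 j
    · simpa using hc1 j
  · simp only [Matrix.cons_val_zero, Matrix.cons_val_one, Pi.sub_apply, Pi.one_apply, sub_mul,
      one_mul, sum_sub_distrib, hc]
    ring

theorem cutCount_vec_one_sub (c : ι → ℝ) : cutCount ![c, 1 - c] = #{j | c j ≠ 0 ∧ c j ≠ 1} := by
  simp only [cutCount, Matrix.cons_val_zero, Matrix.cons_val_one, Pi.sub_apply, Pi.one_apply,
    sub_ne_zero, ne_comm (a := (1 : ℝ))]

theorem exists_fractional_sum_mul_eq (hw : ∀ j, 0 ≤ w j) {T : ℝ} (hT0 : 0 ≤ T)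
    (hT : T ≤ ∑ j, w j) :
    ∃ c : ι → ℝ, (∀ j, 0 ≤ c j) ∧ (∀ j, c j ≤ 1) ∧ ∑ j, c j * w j = T ∧
      #{j | c j ≠ 0 ∧ c j ≠ 1} ≤ 1 := by
  classical
  obtain ⟨X, hX, hXmax⟩ := exists_max_image {Y : Finset ι | ∑ j ∈ Y, w j ≤ T}
    (fun Y => ∑ j ∈ Y, w j) ⟨∅, by simpa using hT0⟩
  replace hX : ∑ j ∈ X, w j ≤ T := (mem_filter.1 hX).2
  rcases hX.eq_or_lt with hXT | hXT
  · refine ⟨fun j => if j ∈ X then 1 else 0, fun j => ?_, fun j => ?_,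
      by simpa [ite_mul] using hXT, by simp⟩ <;> dsimp only <;> split_ifs <;> norm_num
  -- If no item outside `X` overshot `T`, maximality would force them all to weigh `0`.
  obtain ⟨j₀, hj₀, hover⟩ : ∃ j₀ ∉ X, T - ∑ j ∈ X, w j < w j₀ := by
    by_contra! hfits
    have hzero : ∀ j ∉ X, w j = 0 := by
      intro j hj
      have := hXmax (insert j X)
        (mem_filter.2 ⟨mem_univ _, by rw [sum_insert hj]; linarith [hfits j hj]⟩)
      rw [sum_insert hj] at this
      linarith [hw j]
    rw [← sum_subset (subset_univ X) fun j _ hj => hzero j hj] at hT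
    linarith
  have hwj₀ : 0 < w j₀ := by linarith
  obtain ⟨t, ht0, ht1, ht⟩ : ∃ t, 0 ≤ t ∧ t ≤ 1 ∧ ∑ j ∈ X, w j + t * w j₀ = T :=
    ⟨(T - ∑ j ∈ X, w j) / w j₀, div_nonneg (by linarith) hwj₀.le,
      (div_le_one hwj₀).2 hover.le, by rw [div_mul_cancel₀ _ hwj₀.ne']; ring⟩
  refine ⟨fun j => if j ∈ X then 1 else if j = j₀ then t else 0, fun j => ?_, fun j => ?_, ?_, ?_⟩
  · dsimp only; split_ifs <;> norm_num [ht0]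
  · dsimp only; split_ifs <;> norm_num [ht1]
  · have hterm : ∀ j, (if j ∈ X then 1 else if j = j₀ then t else 0) * w j
        = (if j ∈ X then w j else 0) + if j = j₀ then t * w j₀ else 0 := by
      intro j
      by_cases hjX : j ∈ X
      · simp [hjX, ne_of_mem_of_not_mem hjX hj₀]
      · by_cases hj : j = j₀
        · subst hj; simp [hj₀]
        · simp [hjX, hj]
    simp only [hterm, sum_add_distrib, sum_ite_mem, univ_inter, sum_ite_eq', mem_univ, if_true, ht]
  · refine (card_le_card fun j hj => ?_).trans (card_singleton j₀).le
    simp only [mem_filter, mem_univ, true_and] at hj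
    rw [mem_singleton]
    by_contra hj₀
    split_ifs at hj <;> simp_all

theorem exists_isFeasible_nonzeroCount_le_card_add_one (hw : ∀ j, 0 ≤ w j) :
    ∃ x, IsFeasible w x ∧ nonzeroCount x ≤ Fintype.card ι + 1 := by
  have hpos : 0 ≤ ∑ j, w j := sum_nonneg fun j _ => hw j
  obtain ⟨c, hc0, hc1, hc, hcuts⟩ :=
    exists_fractional_sum_mul_eq hw (by positivity) (half_le_self_iff.2 hpos)
  have hx := isFeasible_of_sum_mul_eq_half hc0 hc1 hc
  refine ⟨_, hx, ?_⟩
  rw [nonzeroCount_eq_card_add_cutCount hx.2.1, cutCount_vec_one_sub]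
  omega

theorem exists_isFeasible_nonzeroCount_le_card_iff :
    (∃ x, IsFeasible w x ∧ nonzeroCount x ≤ Fintype.card ι) ↔
      ∃ X : Finset ι, ∑ j ∈ X, w j = (∑ j, w j) / 2 := by
  classical
  constructor
  · rintro ⟨x, hx, hcount⟩
    have hcuts : cutCount x = 0 := by
      rw [nonzeroCount_eq_card_add_cutCount hx.2.1] at hcount; omega
    have hint : ∀ j, x 0 j ≠ 0 → x 0 j = 1 := by
      intro j hj
      have hx1 : x 1 j = 0 :=
        not_not.1 <| not_and.1 (filter_eq_empty_iff.1 (card_eq_zero.1 hcuts) (mem_univ j)) hj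
      linarith [hx.2.1 j]
    refine ⟨({j | x 0 j ≠ 0} : Finset ι), ?_⟩
    rw [← hx.sum_mul_eq_half, sum_filter]
    refine sum_congr rfl fun j _ => ?_
    by_cases hj : x 0 j = 0 <;> simp [hj, hint]
  · rintro ⟨X, hX⟩
    have hx := isFeasible_of_sum_mul_eq_half (c := fun j => if j ∈ X then 1 else 0)
      (fun j => by split_ifs <;> norm_num) (fun j => by split_ifs <;> norm_num)
      (by simpa [ite_mul] using hX)
    refine ⟨_, hx, ?_⟩
    rw [nonzeroCount_eq_card_add_cutCount hx.2.1, cutCount_vec_one_sub]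
    simp

end PartitionLP

open PartitionLP

theorem partition_lp_nonzeros_general (k S : ℕ) (a : Fin k → ℕ)
    (hasum : ∑ j, a j = 2 * S) :
    (∃ x : Fin 2 → Fin k → ℝ, (∀ i j, 0 ≤ x i j) ∧ (∀ j, x 0 j + x 1 j = 1) ∧
        (∑ j, x 0 j * a j = ∑ j, x 1 j * a j) ∧
        (univ.filter fun q : Fin 2 × Fin k => x q.1 q.2 ≠ 0).card ≤ k + 1) ∧
    ((∃ x : Fin 2 → Fin k → ℝ, (∀ i j, 0 ≤ x i j) ∧ (∀ j, x 0 j + x 1 j = 1) ∧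
        (∑ j, x 0 j * a j = ∑ j, x 1 j * a j) ∧
        (univ.filter fun q : Fin 2 × Fin k => x q.1 q.2 ≠ 0).card ≤ k) ↔
      ∃ X : Finset (Fin k), ∑ j ∈ X, a j = S) := by
  have hhalf : (∑ j, (a j : ℝ)) / 2 = S := by
    rw [← Nat.cast_sum, hasum]; push_cast; ring
  have hfractional := exists_isFeasible_nonzeroCount_le_card_add_one (w := fun j => (a j : ℝ))
    fun j => Nat.cast_nonneg (a j)
  have hintegral := exists_isFeasible_nonzeroCount_le_card_iff (w := fun j => (a j : ℝ))
  simp only [IsFeasible, nonzeroCount, Fintype.card_fin, and_assoc, hhalf]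
    at hfractional hintegral
  refine ⟨hfractional, hintegral.trans ?_⟩
  simp only [← Nat.cast_sum, Nat.cast_inj]

/-- The LP encoding of Partition (variables `x i j ≥ 0`, constraints `x 0 j + x 1 j = 1`
and `Σ_j x 0 j · a j = Σ_j x 1 j · a j`) always has a feasible solution with at most
`k + 1` nonzero variables, and has a feasible solution with at most `k` nonzero variables
iff the Partition instance has an equal-sum split. -/
theorem partition_lp_nonzeros (k S : ℕ) (a : Fin k → ℕ)
    (ha : ∀ j, 0 < a j) (hasum : ∑ j, a j = 2 * S) :
    (∃ x : Fin 2 → Fin k → ℝ, (∀ i j, 0 ≤ x i j) ∧ (∀ j, x 0 j + x 1 j = 1) ∧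
        (∑ j, x 0 j * a j = ∑ j, x 1 j * a j) ∧
        (univ.filter fun q : Fin 2 × Fin k => x q.1 q.2 ≠ 0).card ≤ k + 1) ∧
    ((∃ x : Fin 2 → Fin k → ℝ, (∀ i j, 0 ≤ x i j) ∧ (∀ j, x 0 j + x 1 j = 1) ∧
        (∑ j, x 0 j * a j = ∑ j, x 1 j * a j) ∧
        (univ.filter fun q : Fin 2 × Fin k => x q.1 q.2 ≠ 0).card ≤ k) ↔
      ∃ X : Finset (Fin k), ∑ j ∈ X, a j = S) :=
  partition_lp_nonzeros_general k S a hasum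
end
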